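/- arXiv:1112.4009 — 2 statements merged into one kernel-verified Lean document; each statement's English description precedes it below -/
import Mathlib

section
/- For all x, y ∈ ℝ, lim_{t→∞} t^{3/2}·Q_ξ(t,y|x) = ξ²·√(2/π)·K_0(e^{−x/ξ})·K_0(e^{−y/ξ}). -/
open MeasureTheory Filter Topology

/-- Macdonald function of order zero: `K₀(z) = ∫_0^∞ e^{-z cosh u} du`. -/
noncomputable def K0 (z : ℝ) : ℝ := ∫ u in Set.Ioi (0:ℝ), Real.exp (-(z * Real.cosh u))

/-- Macdonald function of imaginary order: `K_{ik}(z) = ∫_0^∞ e^{-z cosh u} cos(ku) du`. -/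
noncomputable def Kik (k z : ℝ) : ℝ :=
  ∫ u in Set.Ioi (0:ℝ), Real.exp (-(z * Real.cosh u)) * Real.cos (k * u)

/-- Transition probability density `Q_ξ(t,y|x)` of the ξ-killing Brownian motion. -/
noncomputable def Qxi (ξ t y x : ℝ) : ℝ :=
  (1 / Real.pi ^ 2) *
    ∫ k : ℝ, Real.exp (-(k ^ 2 * t) / 2) * Kik (ξ * k) (Real.exp (-(x / ξ)))
      * Kik (ξ * k) (Real.exp (-(y / ξ))) * (ξ * k * Real.sinh (Real.pi * ξ * k))

/-- Survival probability `N_ξ(T,x) = ∫_ℝ Q_ξ(T,y|x) dy`. -/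
noncomputable def Nxi (ξ T x : ℝ) : ℝ := ∫ y : ℝ, Qxi ξ T y x

/-!
Substituting `k = s / √t` turns `t^{3/2} Q_ξ(t,y|x)` into
`ξ/π² ∫ e^{-s²/2} F(s/√t) · s · √t sinh(πξ s/√t) ds`, where `F(k) = K_{iξk}(a) K_{iξk}(b)`
with `a = e^{-x/ξ}`, `b = e^{-y/ξ}` is a continuous function bounded by `K₀(a) K₀(b)`.
As `t → ∞` the integrand tends to `πξ F(0) s² e^{-s²/2}`, and since `r sinh(u/r) ≤ sinh u` for `r ≥ 1` it is dominated by a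
multiple of `|s| e^{-s²/4}`. Dominated convergence and the Gaussian second moment
`∫ s² e^{-s²/2} ds = √(2π)` give the limit `ξ/π² · πξ K₀(a) K₀(b) √(2π)`.
-/

open Set Real

theorem integrableOn_exp_neg_mul_cosh {z : ℝ} (hz : 0 < z) :
    IntegrableOn (fun u => exp (-(z * cosh u))) (Ioi 0) := by
  refine (exp_neg_integrableOn_Ioi 0 hz).mono' (by fun_prop) ?_
  refine (ae_restrict_iff' measurableSet_Ioi).2 (ae_of_all _ fun u hu => ?_)
  have hu_le : u ≤ cosh u := ((self_lt_sinh_iff.2 hu).trans (sinh_lt_cosh u)).le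
  rw [norm_of_nonneg (exp_nonneg _), exp_le_exp]
  nlinarith

theorem norm_exp_mul_cos_le (a b : ℝ) : ‖exp a * cos b‖ ≤ exp a := by
  rw [norm_mul, norm_of_nonneg (exp_pos a).le, norm_eq_abs]
  exact mul_le_of_le_one_right (exp_nonneg a) (abs_cos_le_one b)

theorem abs_Kik_le_K0 {z : ℝ} (hz : 0 < z) (k : ℝ) : |Kik k z| ≤ K0 z := by
  unfold Kik K0
  exact norm_integral_le_of_norm_le (integrableOn_exp_neg_mul_cosh hz)
    (ae_of_all _ fun _ => norm_exp_mul_cos_le _ _)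

theorem continuous_Kik {z : ℝ} (hz : 0 < z) : Continuous fun k => Kik k z :=
  continuous_of_dominated (fun _ => by fun_prop)
    (fun _ => ae_of_all _ fun _ => norm_exp_mul_cos_le _ _)
    (integrableOn_exp_neg_mul_cosh hz) (ae_of_all _ fun _ => by fun_prop)

theorem Kik_zero (z : ℝ) : Kik 0 z = K0 z := by simp [Kik, K0]

theorem K0_nonneg (z : ℝ) : 0 ≤ K0 z :=
  setIntegral_nonneg measurableSet_Ioi fun _ _ => (exp_pos _).le

theorem mul_sinh_div_le_sinh {v r : ℝ} (hv : 0 ≤ v) (hr : 1 ≤ r) :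
    r * sinh (v / r) ≤ sinh v := by
  refine hasSum_le (fun n => ?_) ((hasSum_sinh (v / r)).mul_left r) (hasSum_sinh v)
  have hr0 : r ≠ 0 := by positivity
  rw [← mul_div_assoc]
  gcongr
  calc r * (v / r) ^ (2 * n + 1) = v ^ (2 * n + 1) / r ^ (2 * n) := by
        rw [div_pow, pow_succ r]; field_simp
    _ ≤ v ^ (2 * n + 1) := div_le_self (by positivity) (one_le_pow₀ hr)

theorem abs_mul_sinh_div_le_exp_abs (u : ℝ) {r : ℝ} (hr : 1 ≤ r) :
    |r * sinh (u / r)| ≤ exp |u| := by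
  have hr0 : 0 < r := by positivity
  rw [abs_mul, abs_of_pos hr0, abs_sinh, abs_div, abs_of_pos hr0]
  calc r * sinh (|u| / r) ≤ sinh |u| := mul_sinh_div_le_sinh (abs_nonneg u) hr
    _ ≤ exp |u| := by rw [sinh_eq]; linarith [exp_pos (-|u|), exp_pos |u|]

theorem tendsto_mul_sinh_div_atTop (v : ℝ) :
    Tendsto (fun r => r * sinh (v / r)) atTop (𝓝 v) := by
  have hderiv : HasDerivAt (fun u => sinh (v * u)) v 0 := by
    simpa using ((hasDerivAt_id 0).const_mul v).sinh
  refine ((hasDerivAt_iff_tendsto_slope_zero.1 hderiv).comp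
    (tendsto_inv_atTop_nhdsGT_zero.mono_right (nhdsWithin_mono _ fun _ h => ne_of_gt h))).congr' ?_
  filter_upwards [eventually_gt_atTop 0] with r hr
  simp [div_eq_mul_inv]

open ProbabilityTheory in
theorem integral_sq_mul_exp_neg_sq_div_two :
    ∫ s, s ^ 2 * exp (-s ^ 2 / 2) = √(2 * π) := by
  have hvar : ∫ s, s ^ 2 ∂gaussianReal 0 1 = 1 := by
    have := variance_of_integral_eq_zero (X := id) aemeasurable_id
      (integral_id_gaussianReal (μ := 0) (v := 1))
    simpa [variance_id_gaussianReal] using this.symm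
  have hpi : √(2 * π) ≠ 0 := by positivity
  rw [integral_gaussianReal_eq_integral_smul one_ne_zero,
    ← mul_right_inj' hpi, ← integral_const_mul, mul_one] at hvar
  rw [← hvar]
  congr with s
  simp only [gaussianPDFReal_def, smul_eq_mul, NNReal.coe_one, sub_zero, mul_one]
  field_simp

theorem abs_gaussian_mul_sinh_le (c s : ℝ) {r : ℝ} (hr : 1 ≤ r) :
    |exp (-s ^ 2 / 2) * (s * (r * sinh (c * s / r)))| ≤
      exp (c ^ 2) * (|s| * exp (-(1 / 4) * s ^ 2)) := by
  have hexp : exp (-s ^ 2 / 2) * exp |c * s| ≤ exp (c ^ 2) * exp (-(1 / 4) * s ^ 2) := by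
    rw [← exp_add, ← exp_add, exp_le_exp, abs_mul]
    nlinarith [sq_nonneg (|c| - |s| / 2), sq_abs c, sq_abs s]
  rw [abs_mul, abs_mul, abs_of_pos (exp_pos _)]
  calc exp (-s ^ 2 / 2) * (|s| * |r * sinh (c * s / r)|)
      ≤ exp (-s ^ 2 / 2) * (|s| * exp |c * s|) := by
        gcongr; exact abs_mul_sinh_div_le_exp_abs _ hr
    _ = |s| * (exp (-s ^ 2 / 2) * exp |c * s|) := by ring
    _ ≤ |s| * (exp (c ^ 2) * exp (-(1 / 4) * s ^ 2)) := by gcongr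
    _ = _ := by ring

theorem tendsto_integral_gaussian_mul_sinh {F : ℝ → ℝ} {C : ℝ} (hF : Continuous F)
    (hFC : ∀ k, |F k| ≤ C) (c : ℝ) :
    Tendsto (fun r => ∫ s, exp (-s ^ 2 / 2) * F (s / r) * (s * (r * sinh (c * s / r)))) atTop
      (𝓝 (c * F 0 * √(2 * π))) := by
  rw [← integral_sq_mul_exp_neg_sq_div_two, ← integral_const_mul]
  refine tendsto_integral_filter_of_dominated_convergence
    (fun s => C * (exp (c ^ 2) * (|s| * exp (-(1 / 4) * s ^ 2)))) ?_ ?_ ?_ ?_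
  · exact Eventually.of_forall fun r => by fun_prop
  · filter_upwards [eventually_ge_atTop 1] with r hr
    refine ae_of_all _ fun s => ?_
    rw [norm_eq_abs, mul_right_comm, mul_comm _ (F _), abs_mul]
    exact mul_le_mul (hFC _) (abs_gaussian_mul_sinh_le c s hr) (abs_nonneg _)
      ((abs_nonneg _).trans (hFC 0))
  · have h := (integrable_rpow_mul_exp_neg_mul_sq (b := 1 / 4) (by norm_num) (s := 1)
      (by norm_num)).norm
    refine ((h.const_mul (exp (c ^ 2))).const_mul C).congr (ae_of_all _ fun s => ?_)
    simp
  · refine ae_of_all _ fun s => ?_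
    have hFs : Tendsto (fun r => F (s / r)) atTop (𝓝 (F 0)) :=
      (hF.tendsto 0).comp (tendsto_const_nhds.div_atTop tendsto_id)
    convert ((hFs.const_mul (exp (-s ^ 2 / 2))).mul
      ((tendsto_mul_sinh_div_atTop (c * s)).const_mul s)) using 2
    ring

theorem rpow_three_halves_mul_Qxi_eq_integral (ξ x y : ℝ) {r : ℝ} (hr : 0 < r) :
    (r ^ 2) ^ ((3 : ℝ) / 2) * Qxi ξ (r ^ 2) y x =
      ξ / π ^ 2 * ∫ s, exp (-s ^ 2 / 2) *
        (Kik (ξ * (s / r)) (exp (-(x / ξ))) * Kik (ξ * (s / r)) (exp (-(y / ξ)))) *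
        (s * (r * sinh (π * ξ * s / r))) := by
  have hpow : (r ^ 2) ^ ((3 : ℝ) / 2) = r ^ 3 := by
    rw [← rpow_natCast, ← rpow_mul hr.le]; norm_num
  have hsub (g : ℝ → ℝ) : ∫ k, g k = r⁻¹ * ∫ s, g (s / r) := by
    rw [Measure.integral_comp_div, abs_of_pos hr, smul_eq_mul, inv_mul_cancel_left₀ hr.ne']
  rw [Qxi, hpow, hsub, ← integral_const_mul, ← integral_const_mul, ← integral_const_mul,
    ← integral_const_mul]
  congr with s
  have hs : (s / r) ^ 2 * r ^ 2 = s ^ 2 := by field_simp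
  rw [hs]
  field_simp

theorem Qxi_long_time_asymptotics_general (ξ : ℝ) (x y : ℝ) :
    Tendsto (fun t : ℝ => t ^ ((3 : ℝ) / 2) * Qxi ξ t y x) atTop
      (𝓝 (ξ ^ 2 * Real.sqrt (2 / Real.pi)
        * K0 (Real.exp (-(x / ξ))) * K0 (Real.exp (-(y / ξ))))) := by
  set a := exp (-(x / ξ))
  set b := exp (-(y / ξ))
  have ha : 0 < a := exp_pos _
  have hb : 0 < b := exp_pos _
  set F := fun k => Kik (ξ * k) a * Kik (ξ * k) b
  have hF : Continuous F := by
    have := continuous_Kik ha; have := continuous_Kik hb; fun_prop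
  have hFC (k : ℝ) : |F k| ≤ K0 a * K0 b := by
    rw [abs_mul]
    exact mul_le_mul (abs_Kik_le_K0 ha _) (abs_Kik_le_K0 hb _) (abs_nonneg _) (K0_nonneg a)
  have hF0 : F 0 = K0 a * K0 b := by simp [F, Kik_zero]
  have hlim := ((tendsto_integral_gaussian_mul_sinh hF hFC (π * ξ)).comp
    tendsto_sqrt_atTop).const_mul (ξ / π ^ 2)
  have hsqrt : √(2 * π) = √(2 / π) * π := by
    have h2pi : 2 * π = 2 / π * (π * π) := by field_simp
    rw [h2pi, sqrt_mul (by positivity), sqrt_mul_self pi_pos.le]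
  convert hlim.congr' ?_ using 2
  · rw [hF0, hsqrt]; field_simp
  · filter_upwards [eventually_gt_atTop 0] with t ht
    rw [Function.comp_apply, ← rpow_three_halves_mul_Qxi_eq_integral ξ x y (sqrt_pos.2 ht),
      sq_sqrt ht.le]

/-- Long-time asymptotics of the transition density:
`lim_{t→∞} t^{3/2} Q_ξ(t,y|x) = ξ² √(2/π) K₀(e^{-x/ξ}) K₀(e^{-y/ξ})`. -/
theorem Qxi_long_time_asymptotics (ξ : ℝ) (hξ : 0 < ξ) (x y : ℝ) :
    Tendsto (fun t : ℝ => t ^ ((3 : ℝ) / 2) * Qxi ξ t y x) atTop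
      (𝓝 (ξ ^ 2 * Real.sqrt (2 / Real.pi)
        * K0 (Real.exp (-(x / ξ))) * K0 (Real.exp (-(y / ξ))))) :=
  Qxi_long_time_asymptotics_general ξ x y
end

section
/- For each fixed y ∈ ℝ, the function u(t,x) := (K_0(e^{−y/ξ})/K_0(e^{−x/ξ}))·Q_ξ(t,y|x) satisfies, for all t > 0 and x ∈ ℝ, the diffusion equation ∂u/∂t = (1/2)·∂²u/∂x² + (d/dx log K_0(e^{−x/ξ}))·∂u/∂x; i.e., the conditioned killing Brownian motion has the Matsumoto–Yor infinitesimal generator (1/2)d²/dx² + (d/dx log K_0(e^{−x/ξ}))·d/dx. -/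
/-!
Each `φₖ(x) = K_{iξk}(e^{-x/ξ})` solves `½ φₖ'' - V φₖ = -(k²/2) φₖ` with
`V(x) = e^{-2x/ξ} / (2ξ²)`: this is the modified Bessel equation after the substitution
`z = e^{-x/ξ}`. Differentiating under the `k`-integral, `Q_ξ` therefore solves the heat equation
`∂ₜQ = ½ ∂ₓ²Q - V Q`, while the case `k = 0` says that `h = K₀(e^{-x/ξ}) > 0` satisfies
`½ h'' = V h`. The theorem is Doob's `h`-transform `u = c Q / h`. All the differentiations under
the integral are dominated through the bound
`|∫ coshⁿ u e^{-z cosh u} cos(κu) du| ≤ ∫ coshⁿ u e^{-z cosh u} du`, which is uniform in `κ`; the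
Bessel equation turns it into a uniform bound on `k² K_{iξk}` as well, and the remaining weight
`e^{-k²t/2} ξk sinh(πξk)` is integrable.
-/

open MeasureTheory Filter Topology

open Set Real

theorem deriv_hTransform {h : ℝ → ℝ} {Q : ℝ → ℝ → ℝ} {c t x V h'' Q'' Qₜ : ℝ}
    (h_ne : ∀ r, h r ≠ 0) (h_diff : Differentiable ℝ h) (h_deriv2 : HasDerivAt (deriv h) h'' x)
    (Q_diff : Differentiable ℝ (Q t)) (Q_deriv2 : HasDerivAt (deriv (Q t)) Q'' x)
    (Q_time : HasDerivAt (fun s => Q s x) Qₜ t)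
    (heat : Qₜ = 1 / 2 * Q'' - V * Q t x) (harmonic : 1 / 2 * h'' = V * h x) :
    deriv (fun s => c / h x * Q s x) t
      = 1 / 2 * deriv (deriv fun r => c / h r * Q t r) x
        + deriv (fun r => Real.log (h r)) x * deriv (fun r => c / h r * Q t r) x := by
  have hu : ∀ r, HasDerivAt (fun r => c / h r * Q t r)
      (-(c * deriv h r) / h r ^ 2 * Q t r + c / h r * deriv (Q t) r) r := fun r => by
    have := ((hasDerivAt_const r c).fun_div (h_diff r).hasDerivAt (h_ne r)).fun_mul
      (Q_diff r).hasDerivAt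
    simpa only [zero_mul, zero_sub] using this
  have hu' := (((h_deriv2.const_mul c).fun_neg.fun_div ((h_diff x).hasDerivAt.fun_pow 2)
    (pow_ne_zero 2 (h_ne x))).fun_mul (Q_diff x).hasDerivAt).fun_add
    (((hasDerivAt_const x c).fun_div (h_diff x).hasDerivAt (h_ne x)).fun_mul Q_deriv2)
  rw [(Q_time.const_mul _).deriv, funext fun r => (hu r).deriv, hu'.deriv,
    ((h_diff x).hasDerivAt.log (h_ne x)).deriv, heat]
  have hx := h_ne x
  beta_reduce
  field_simp
  linear_combination 2 * c * h x ^ 2 * Q t x * harmonic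

lemma hasDerivAt_integral_mul_of_bounded {α : Type*} [MeasurableSpace α] {μ : Measure α}
    {g : α → ℝ} (hg : Integrable g μ) {A A' : ℝ → α → ℝ} {x₀ ε M₀ M₁ : ℝ} (hε : 0 < ε)
    (hA_meas : ∀ r, AEStronglyMeasurable (A r) μ) (hA'_meas : AEStronglyMeasurable (A' x₀) μ)
    (hA_bound : ∀ a, ‖A x₀ a‖ ≤ M₀) (hA'_bound : ∀ a, ∀ r ∈ Metric.ball x₀ ε, ‖A' r a‖ ≤ M₁)
    (hA_deriv : ∀ a, ∀ r ∈ Metric.ball x₀ ε, HasDerivAt (A · a) (A' r a) r) :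
    HasDerivAt (fun r => ∫ a, g a * A r a ∂μ) (∫ a, g a * A' x₀ a ∂μ) x₀ :=
  (hasDerivAt_integral_of_dominated_loc_of_deriv_le (F := fun r a => g a * A r a)
    (bound := fun a => ‖g a‖ * M₁) (Metric.ball_mem_nhds x₀ hε)
    (Eventually.of_forall fun r => hg.aestronglyMeasurable.mul (hA_meas r))
    (hg.mul_bdd (hA_meas x₀) (ae_of_all _ hA_bound)) (hg.aestronglyMeasurable.mul hA'_meas)
    (ae_of_all _ fun a r hr => by
      rw [norm_mul]
      exact mul_le_mul_of_nonneg_left (hA'_bound a r hr) (norm_nonneg _))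
    (hg.norm.mul_const M₁)
    (ae_of_all _ fun a r hr => (hA_deriv a r hr).const_mul (g a))).2

lemma pow_mul_exp_neg_le_factorial_div_pow {c s : ℝ} (hc : 0 < c) (hs : 0 ≤ s) (n : ℕ) :
    s ^ n * exp (-(c * s)) ≤ n.factorial / c ^ n := by
  have key := pow_div_factorial_le_exp (c * s) (mul_nonneg hc.le hs) n
  rw [div_le_iff₀ (by positivity), mul_pow] at key
  rw [exp_neg, ← div_eq_mul_inv, div_le_div_iff₀ (exp_pos _) (by positivity)]
  linarith

lemma integrableOn_cosh_pow_mul_exp_neg {z : ℝ} (hz : 0 < z) (n : ℕ) :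
    IntegrableOn (fun u => cosh u ^ n * exp (-(z * cosh u))) (Ioi 0) := by
  refine Integrable.mono' ((exp_neg_integrableOn_Ioi 0 (half_pos hz)).const_mul
    (n.factorial / (z / 2) ^ n)) (by fun_prop) ?_
  filter_upwards [ae_restrict_mem measurableSet_Ioi] with u (hu : 0 < u)
  have hu_cosh : u ≤ cosh u := (self_le_sinh_iff.2 hu.le).trans (sinh_lt_cosh u).le
  have hsplit : exp (-(z * cosh u)) = exp (-(z / 2 * cosh u)) * exp (-(z / 2 * cosh u)) := by
    rw [← exp_add]; congr 1; ring
  rw [norm_of_nonneg (by positivity), hsplit, ← mul_assoc]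
  gcongr
  · exact pow_mul_exp_neg_le_factorial_div_pow (half_pos hz) (cosh_pos u).le n
  · nlinarith [half_pos hz]

/-- `(-∂_z)ⁿ Kik κ z`. -/
noncomputable def kikMoment (n : ℕ) (κ z : ℝ) : ℝ :=
  ∫ u in Ioi 0, cosh u ^ n * (exp (-(z * cosh u)) * cos (κ * u))

lemma kikMoment_zero (κ z : ℝ) : kikMoment 0 κ z = Kik κ z := by
  simp [kikMoment, Kik]

lemma K0_eq_Kik (z : ℝ) : K0 z = Kik 0 z := by
  simp [K0, Kik]

lemma norm_kikMoment_integrand_le (n : ℕ) (κ : ℝ) {z zm : ℝ} (hz : zm ≤ z) (u : ℝ) :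
    ‖cosh u ^ n * (exp (-(z * cosh u)) * cos (κ * u))‖ ≤ cosh u ^ n * exp (-(zm * cosh u)) := by
  rw [norm_eq_abs, abs_mul, abs_mul, abs_of_nonneg (by positivity : (0:ℝ) ≤ cosh u ^ n),
    abs_of_pos (exp_pos _)]
  gcongr
  calc exp (-(z * cosh u)) * |cos (κ * u)| ≤ exp (-(z * cosh u)) :=
        mul_le_of_le_one_right (exp_pos _).le (abs_cos_le_one _)
    _ ≤ exp (-(zm * cosh u)) := by gcongr

lemma integrableOn_kikMoment_integrand (n : ℕ) (κ : ℝ) {z : ℝ} (hz : 0 < z) :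
    IntegrableOn (fun u => cosh u ^ n * (exp (-(z * cosh u)) * cos (κ * u))) (Ioi 0) :=
  (integrableOn_cosh_pow_mul_exp_neg hz n).mono' (by fun_prop)
    (ae_of_all _ (norm_kikMoment_integrand_le n κ le_rfl))

lemma abs_kikMoment_le (n : ℕ) (κ : ℝ) {z zm : ℝ} (hzm : 0 < zm) (hz : zm ≤ z) :
    |kikMoment n κ z| ≤ kikMoment n 0 zm := by
  simp only [kikMoment, zero_mul, cos_zero, mul_one, ← norm_eq_abs]
  exact norm_integral_le_of_norm_le (integrableOn_cosh_pow_mul_exp_neg hzm n)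
    (ae_of_all _ (norm_kikMoment_integrand_le n κ hz))

lemma kikMoment_nonneg (n : ℕ) (z : ℝ) : 0 ≤ kikMoment n 0 z :=
  setIntegral_nonneg measurableSet_Ioi fun u _ => by simp only [zero_mul, cos_zero]; positivity

lemma continuous_kikMoment_mul (n : ℕ) (ξ : ℝ) {z : ℝ} (hz : 0 < z) :
    Continuous fun k => kikMoment n (ξ * k) z :=
  continuous_of_dominated (fun _ => by fun_prop)
    (fun k => ae_of_all _ (norm_kikMoment_integrand_le n (ξ * k) le_rfl))
    (integrableOn_cosh_pow_mul_exp_neg hz n) (ae_of_all _ fun _ => by fun_prop)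

lemma hasDerivAt_kikMoment (n : ℕ) (κ : ℝ) {z : ℝ} (hz : 0 < z) :
    HasDerivAt (kikMoment n κ) (-kikMoment (n + 1) κ z) z := by
  have hderiv : ∀ u w : ℝ, HasDerivAt (fun w => cosh u ^ n * (exp (-(w * cosh u)) * cos (κ * u)))
      (-(cosh u ^ (n + 1) * (exp (-(w * cosh u)) * cos (κ * u)))) w := fun u w => by
    have h := (((hasDerivAt_mul_const (cosh u)).fun_neg.exp).mul_const (cos (κ * u))).const_mul
      (cosh u ^ n) (x := w)
    exact h.congr_deriv (by ring)
  have hbound : ∀ u, ∀ w ∈ Metric.ball z (z / 2),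
      ‖-(cosh u ^ (n + 1) * (exp (-(w * cosh u)) * cos (κ * u)))‖
        ≤ cosh u ^ (n + 1) * exp (-(z / 2 * cosh u)) := fun u w hw => by
    rw [norm_neg]
    refine norm_kikMoment_integrand_le (n + 1) κ ?_ u
    linarith [(abs_lt.1 (mem_ball_iff_norm.1 hw)).1]
  have key := hasDerivAt_integral_of_dominated_loc_of_deriv_le
    (F := fun w u => cosh u ^ n * (exp (-(w * cosh u)) * cos (κ * u)))
    (Metric.ball_mem_nhds z (half_pos hz)) (Eventually.of_forall fun _ => by fun_prop)
    (integrableOn_kikMoment_integrand n κ hz) (by fun_prop)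
    (ae_of_all _ hbound) (integrableOn_cosh_pow_mul_exp_neg (half_pos hz) (n + 1))
    (ae_of_all _ fun u w _ => hderiv u w)
  rw [integral_neg] at key
  exact key.2

lemma abs_sinh_le_cosh (u : ℝ) : |sinh u| ≤ cosh u := by
  rw [abs_sinh, ← cosh_abs]
  exact (sinh_lt_cosh _).le

/-- The modified Bessel equation `z² K'' + z K' - (z² - κ²) K = 0` of order `iκ`. -/
lemma kikMoment_bessel (κ : ℝ) {z : ℝ} (hz : 0 < z) :
    z ^ 2 * kikMoment 2 κ z - z * kikMoment 1 κ z - (z ^ 2 - κ ^ 2) * kikMoment 0 κ z = 0 := by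
  set m : ℕ → ℝ → ℝ := fun n u => cosh u ^ n * (exp (-(z * cosh u)) * cos (κ * u))
  -- the integrand is the `u`-derivative of `g`, which vanishes at `0` and at `∞`
  set g : ℝ → ℝ := fun u =>
    -(z * sinh u) * (exp (-(z * cosh u)) * cos (κ * u)) + κ * (exp (-(z * cosh u)) * sin (κ * u))
  have hg : ∀ u, HasDerivAt g (z ^ 2 * m 2 u - z * m 1 u - (z ^ 2 - κ ^ 2) * m 0 u) u := by
    intro u
    have hexp := ((hasDerivAt_cosh u).const_mul z).fun_neg.exp
    have hcos := ((hasDerivAt_id u).const_mul κ).cos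
    have hsin := ((hasDerivAt_id u).const_mul κ).sin
    have h := (((hasDerivAt_sinh u).const_mul z).fun_neg.fun_mul (hexp.fun_mul hcos)).fun_add
      ((hexp.fun_mul hsin).const_mul κ)
    refine h.congr_deriv ?_
    simp only [m, id, mul_one]
    linear_combination (z ^ 2 * exp (-(z * cosh u)) * cos (κ * u)) * sinh_sq u
  have hm : ∀ n, IntegrableOn (m n) (Ioi 0) := fun n => integrableOn_kikMoment_integrand n κ hz
  have hm21 : IntegrableOn (fun u => z ^ 2 * m 2 u - z * m 1 u) (Ioi 0) :=
    ((hm 2).const_mul _).sub ((hm 1).const_mul _)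
  have hg'_int : IntegrableOn (fun u => z ^ 2 * m 2 u - z * m 1 u - (z ^ 2 - κ ^ 2) * m 0 u)
      (Ioi 0) := hm21.sub ((hm 0).const_mul _)
  have hg_int : IntegrableOn g (Ioi 0) := by
    refine (((integrableOn_cosh_pow_mul_exp_neg hz 1).const_mul (z + |κ|))).mono'
      (by fun_prop) (ae_of_all _ fun u => ?_)
    have he := exp_pos (-(z * cosh u))
    have hc := one_le_cosh u
    have h1 : |-(z * sinh u) * (exp (-(z * cosh u)) * cos (κ * u))|
        ≤ z * (cosh u * exp (-(z * cosh u))) := calc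
      _ = z * |sinh u| * (exp (-(z * cosh u)) * |cos (κ * u)|) := by
        rw [abs_mul, abs_neg, abs_mul, abs_mul, abs_of_pos hz, abs_of_pos he]
      _ ≤ z * cosh u * exp (-(z * cosh u)) :=
        mul_le_mul (mul_le_mul_of_nonneg_left (abs_sinh_le_cosh u) hz.le)
          (mul_le_of_le_one_right he.le (abs_cos_le_one _)) (by positivity) (by positivity)
      _ = z * (cosh u * exp (-(z * cosh u))) := by ring
    have h2 : |κ * (exp (-(z * cosh u)) * sin (κ * u))| ≤ |κ| * (cosh u * exp (-(z * cosh u))) := by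
      rw [abs_mul, abs_mul, abs_of_pos he]
      refine mul_le_mul_of_nonneg_left ?_ (abs_nonneg κ)
      calc exp (-(z * cosh u)) * |sin (κ * u)| ≤ exp (-(z * cosh u)) :=
            mul_le_of_le_one_right he.le (abs_sin_le_one _)
        _ ≤ cosh u * exp (-(z * cosh u)) := le_mul_of_one_le_left he.le hc
    rw [norm_eq_abs, pow_one, add_mul]
    exact (abs_add_le _ _).trans (add_le_add h1 h2)
  have key := integral_Ioi_of_hasDerivAt_of_tendsto' (fun u _ => hg u) hg'_int
    (tendsto_zero_of_hasDerivAt_of_integrableOn_Ioi (fun u _ => hg u) hg'_int hg_int)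
  rw [integral_sub hm21 ((hm 0).const_mul _),
    integral_sub ((hm 2).const_mul _) ((hm 1).const_mul _), integral_const_mul,
    integral_const_mul, integral_const_mul] at key
  have hg0 : g 0 = 0 := by simp [g]
  rwa [hg0, sub_zero] at key

lemma K0_pos {z : ℝ} (hz : 0 < z) : 0 < K0 z := by
  have hint : IntegrableOn (fun u => exp (-(z * cosh u))) (Ioi 0) := by
    simpa using integrableOn_cosh_pow_mul_exp_neg hz 0
  rw [K0, setIntegral_pos_iff_support_of_nonneg_ae (ae_of_all _ fun u => (exp_pos _).le) hint]
  simp [Function.support, exp_ne_zero]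

lemma hasDerivAt_exp_neg_div (ξ x : ℝ) :
    HasDerivAt (fun r => exp (-(r / ξ))) (-(exp (-(x / ξ)) / ξ)) x := by
  have h := ((hasDerivAt_id x).div_const ξ).fun_neg.exp
  exact h.congr_deriv (by simp only [id]; ring)

lemma hasDerivAt_kikMoment_exp (n : ℕ) (κ ξ x : ℝ) :
    HasDerivAt (fun r => kikMoment n κ (exp (-(r / ξ))))
      (kikMoment (n + 1) κ (exp (-(x / ξ))) * (exp (-(x / ξ)) / ξ)) x := by
  have h := (hasDerivAt_kikMoment n κ (exp_pos (-(x / ξ)))).comp x (hasDerivAt_exp_neg_div ξ x)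
  exact h.congr_deriv (by ring)

lemma hasDerivAt_Kik_exp (κ ξ x : ℝ) :
    HasDerivAt (fun r => Kik κ (exp (-(r / ξ))))
      (kikMoment 1 κ (exp (-(x / ξ))) * (exp (-(x / ξ)) / ξ)) x := by
  simpa only [kikMoment_zero] using hasDerivAt_kikMoment_exp 0 κ ξ x

lemma hasDerivAt_kikMoment_one_exp_mul (κ ξ x : ℝ) :
    HasDerivAt (fun r => kikMoment 1 κ (exp (-(r / ξ))) * (exp (-(r / ξ)) / ξ))
      (kikMoment 2 κ (exp (-(x / ξ))) * (exp (-(x / ξ)) / ξ) ^ 2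
        - kikMoment 1 κ (exp (-(x / ξ))) * (exp (-(x / ξ)) / ξ ^ 2)) x := by
  have h := (hasDerivAt_kikMoment_exp 1 κ ξ x).mul ((hasDerivAt_exp_neg_div ξ x).div_const ξ)
  exact h.congr_deriv (by ring)

/-- The left side is `∂ₓ² Kik κ (e^{-x/ξ})` at `z = e^{-x/ξ}`: in the variable `x` the Bessel
equation becomes a Schrödinger equation with potential `z² / ξ²`. -/
lemma kikMoment_exp_second_deriv_eq {ξ : ℝ} (hξ : ξ ≠ 0) (κ : ℝ) {z : ℝ} (hz : 0 < z) :
    kikMoment 2 κ z * (z / ξ) ^ 2 - kikMoment 1 κ z * (z / ξ ^ 2)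
      = (z ^ 2 - κ ^ 2) / ξ ^ 2 * Kik κ z := by
  rw [← kikMoment_zero]
  field_simp
  linear_combination kikMoment_bessel κ hz

lemma deriv_Kik_exp (κ ξ : ℝ) :
    deriv (fun r => Kik κ (exp (-(r / ξ))))
      = fun r => kikMoment 1 κ (exp (-(r / ξ))) * (exp (-(r / ξ)) / ξ) :=
  funext fun r => (hasDerivAt_Kik_exp κ ξ r).deriv

lemma hasDerivAt_deriv_Kik_exp {ξ : ℝ} (hξ : ξ ≠ 0) (κ x : ℝ) :
    HasDerivAt (deriv fun r => Kik κ (exp (-(r / ξ))))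
      ((exp (-(x / ξ)) ^ 2 - κ ^ 2) / ξ ^ 2 * Kik κ (exp (-(x / ξ)))) x := by
  rw [deriv_Kik_exp, ← kikMoment_exp_second_deriv_eq hξ κ (exp_pos _)]
  exact hasDerivAt_kikMoment_one_exp_mul κ ξ x

lemma exp_neg_div_mem_Icc_of_mem_ball {ξ : ℝ} (hξ : 0 < ξ) {x r : ℝ} (hr : r ∈ Metric.ball x 1) :
    exp (-(r / ξ)) ∈ Icc (exp (-((x + 1) / ξ))) (exp (-((x - 1) / ξ))) := by
  obtain ⟨h₁, h₂⟩ := abs_lt.1 (mem_ball_iff_norm.1 hr)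
  constructor <;> gcongr <;> linarith

lemma integrable_exp_neg_sq_mul_mul_sinh {t : ℝ} (ht : 0 < t) (a b : ℝ) :
    Integrable fun k : ℝ => exp (-(k ^ 2 * t) / 2) * (a * k * sinh (b * k)) := by
  refine ((integrable_exp_neg_mul_sq (by positivity : 0 < t / 4)).const_mul
    (|a| * exp ((1 + |b|) ^ 2 / t))).mono' (by fun_prop) (ae_of_all _ fun k => ?_)
  have hk : |k| ≤ exp |k| := by linarith [add_one_le_exp |k|]
  have hsinh : |sinh (b * k)| ≤ exp (|b| * |k|) := by
    rw [abs_sinh, abs_mul, sinh_eq]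
    linarith [exp_pos (-(|b| * |k|)), exp_pos (|b| * |k|)]
  have hquad : (1 + |b|) * |k| - k ^ 2 * t / 2 ≤ (1 + |b|) ^ 2 / t + -(t / 4) * k ^ 2 := by
    have key : (1 + |b|) ^ 2 / t + -(t / 4) * k ^ 2 - ((1 + |b|) * |k| - k ^ 2 * t / 2)
        = ((1 + |b|) - t / 2 * |k|) ^ 2 / t := by
      rw [← sq_abs k]; field_simp; ring
    linarith [div_nonneg (sq_nonneg ((1 + |b|) - t / 2 * |k|)) ht.le]
  calc ‖exp (-(k ^ 2 * t) / 2) * (a * k * sinh (b * k))‖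
      = |a| * (|k| * |sinh (b * k)|) * exp (-(k ^ 2 * t) / 2) := by
        rw [norm_eq_abs, abs_mul, abs_mul, abs_mul, abs_of_pos (exp_pos _)]; ring
    _ ≤ |a| * (exp |k| * exp (|b| * |k|)) * exp (-(k ^ 2 * t) / 2) := by gcongr
    _ = |a| * exp ((1 + |b|) * |k| - k ^ 2 * t / 2) := by
        rw [mul_assoc, ← exp_add, ← exp_add]; ring_nf
    _ ≤ |a| * exp ((1 + |b|) ^ 2 / t + -(t / 4) * k ^ 2) := by gcongr
    _ = |a| * exp ((1 + |b|) ^ 2 / t) * exp (-(t / 4) * k ^ 2) := by rw [exp_add]; ring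

lemma continuous_Kik_mul (ξ : ℝ) {z : ℝ} (hz : 0 < z) : Continuous fun k => Kik (ξ * k) z := by
  simpa only [kikMoment_zero] using continuous_kikMoment_mul 0 ξ hz

lemma abs_Kik_le (κ : ℝ) {z : ℝ} (hz : 0 < z) : |Kik κ z| ≤ K0 z := by
  simpa only [kikMoment_zero, ← K0_eq_Kik] using abs_kikMoment_le 0 κ hz le_rfl

noncomputable def qxiWeight (ξ t y k : ℝ) : ℝ :=
  exp (-(k ^ 2 * t) / 2) * Kik (ξ * k) (exp (-(y / ξ))) * (ξ * k * sinh (π * ξ * k))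

lemma Qxi_eq_integral_qxiWeight_mul (ξ t y x : ℝ) :
    Qxi ξ t y x = 1 / π ^ 2 * ∫ k, qxiWeight ξ t y k * Kik (ξ * k) (exp (-(x / ξ))) := by
  unfold Qxi qxiWeight
  congr 1
  exact integral_congr_ae (ae_of_all _ fun k => by ring)

lemma continuous_qxiWeight (ξ t y : ℝ) : Continuous (qxiWeight ξ t y) := by
  have := continuous_Kik_mul ξ (exp_pos (-(y / ξ)))
  unfold qxiWeight
  fun_prop

lemma integrable_qxiWeight (ξ : ℝ) {t : ℝ} (ht : 0 < t) (y : ℝ) : Integrable (qxiWeight ξ t y) := by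
  refine ((integrable_exp_neg_sq_mul_mul_sinh ht ξ (π * ξ)).norm.const_mul
    (K0 (exp (-(y / ξ))))).mono' (continuous_qxiWeight ξ t y).aestronglyMeasurable
    (ae_of_all _ fun k => ?_)
  have h := abs_Kik_le (ξ * k) (exp_pos (-(y / ξ)))
  rw [qxiWeight, norm_eq_abs, norm_eq_abs, mul_right_comm, abs_mul, mul_comm, ← mul_assoc]
  gcongr

lemma abs_qxiWeight_le_of_le (ξ y k : ℝ) {s t : ℝ} (hts : t ≤ s) :
    |qxiWeight ξ s y k| ≤ |qxiWeight ξ t y k| := by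
  simp only [qxiWeight, abs_mul, abs_of_pos (exp_pos _)]
  gcongr

section QxiDerivatives

variable {ξ t : ℝ}

lemma hasDerivAt_Qxi_space (hξ : 0 < ξ) (ht : 0 < t) (y x : ℝ) :
    HasDerivAt (fun r => Qxi ξ t y r) (1 / π ^ 2 * ∫ k, qxiWeight ξ t y k
      * (kikMoment 1 (ξ * k) (exp (-(x / ξ))) * (exp (-(x / ξ)) / ξ))) x := by
  simp only [Qxi_eq_integral_qxiWeight_mul]
  refine HasDerivAt.const_mul _ (hasDerivAt_integral_mul_of_bounded (M₀ := K0 (exp (-(x / ξ))))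
    (M₁ := kikMoment 1 0 (exp (-((x + 1) / ξ))) * (exp (-((x - 1) / ξ)) / ξ))
    (integrable_qxiWeight ξ ht y) one_pos (fun r => ?_) ?_ (fun k => ?_) (fun k r hr => ?_)
    (fun k r _ => hasDerivAt_Kik_exp (ξ * k) ξ r))
  · exact (continuous_Kik_mul ξ (exp_pos _)).aestronglyMeasurable
  · exact ((continuous_kikMoment_mul 1 ξ (exp_pos _)).mul continuous_const).aestronglyMeasurable
  · exact abs_Kik_le (ξ * k) (exp_pos _)
  · obtain ⟨hlo, hhi⟩ := exp_neg_div_mem_Icc_of_mem_ball hξ hr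
    rw [norm_mul, norm_eq_abs, norm_of_nonneg (by positivity)]
    exact mul_le_mul (abs_kikMoment_le 1 _ (exp_pos _) hlo) (by gcongr) (by positivity)
      (kikMoment_nonneg 1 _)

lemma hasDerivAt_deriv_Qxi_space (hξ : 0 < ξ) (ht : 0 < t) (y x : ℝ) :
    HasDerivAt (deriv fun r => Qxi ξ t y r) (1 / π ^ 2 * ∫ k, qxiWeight ξ t y k
      * ((exp (-(x / ξ)) ^ 2 - (ξ * k) ^ 2) / ξ ^ 2 * Kik (ξ * k) (exp (-(x / ξ))))) x := by
  rw [funext fun r => (hasDerivAt_Qxi_space hξ ht y r).deriv]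
  simp only [← kikMoment_exp_second_deriv_eq hξ.ne' _ (exp_pos _)]
  refine HasDerivAt.const_mul _ (hasDerivAt_integral_mul_of_bounded
    (M₀ := kikMoment 1 0 (exp (-(x / ξ))) * (exp (-(x / ξ)) / ξ))
    (M₁ := kikMoment 2 0 (exp (-((x + 1) / ξ))) * (exp (-((x - 1) / ξ)) / ξ) ^ 2
      + kikMoment 1 0 (exp (-((x + 1) / ξ))) * (exp (-((x - 1) / ξ)) / ξ ^ 2))
    (integrable_qxiWeight ξ ht y) one_pos (fun r => ?_) ?_ (fun k => ?_) (fun k r hr => ?_)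
    (fun k r _ => hasDerivAt_kikMoment_one_exp_mul (ξ * k) ξ r))
  · exact ((continuous_kikMoment_mul 1 ξ (exp_pos _)).mul continuous_const).aestronglyMeasurable
  · exact (((continuous_kikMoment_mul 2 ξ (exp_pos _)).mul continuous_const).sub
      ((continuous_kikMoment_mul 1 ξ (exp_pos _)).mul continuous_const)).aestronglyMeasurable
  · rw [norm_mul, norm_eq_abs, norm_of_nonneg (by positivity)]
    gcongr
    exact abs_kikMoment_le 1 _ (exp_pos _) le_rfl
  · obtain ⟨hlo, hhi⟩ := exp_neg_div_mem_Icc_of_mem_ball hξ hr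
    have h₂ := abs_kikMoment_le 2 (ξ * k) (exp_pos _) hlo
    have h₁ := abs_kikMoment_le 1 (ξ * k) (exp_pos _) hlo
    rw [norm_eq_abs]
    refine (abs_sub _ _).trans (add_le_add ?_ ?_) <;> rw [abs_mul]
    · exact mul_le_mul h₂ (by rw [abs_of_nonneg (by positivity)]; gcongr) (abs_nonneg _)
        (kikMoment_nonneg 2 _)
    · exact mul_le_mul h₁ (by rw [abs_of_nonneg (by positivity)]; gcongr) (abs_nonneg _)
        (kikMoment_nonneg 1 _)

lemma abs_sq_mul_Kik_le (hξ : ξ ≠ 0) (k : ℝ) {z : ℝ} (hz : 0 < z) :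
    |k ^ 2 * Kik (ξ * k) z|
      ≤ (z ^ 2 * K0 z + z ^ 2 * kikMoment 2 0 z + z * kikMoment 1 0 z) / ξ ^ 2 := by
  have hbessel : k ^ 2 * Kik (ξ * k) z
      = (z ^ 2 * Kik (ξ * k) z - z ^ 2 * kikMoment 2 (ξ * k) z + z * kikMoment 1 (ξ * k) z)
        / ξ ^ 2 := by
    rw [← kikMoment_zero, eq_div_iff (pow_ne_zero 2 hξ)]
    linear_combination kikMoment_bessel (ξ * k) hz
  have h₀ := abs_Kik_le (ξ * k) hz
  have h₂ := abs_kikMoment_le 2 (ξ * k) hz le_rfl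
  have h₁ := abs_kikMoment_le 1 (ξ * k) hz le_rfl
  rw [hbessel, abs_div, abs_of_pos (by positivity : (0 : ℝ) < ξ ^ 2)]
  gcongr
  refine (abs_add_le _ _).trans (add_le_add ((abs_sub _ _).trans (add_le_add ?_ ?_)) ?_) <;>
    rw [abs_mul, abs_of_nonneg (by positivity)] <;> gcongr

lemma hasDerivAt_qxiWeight_time (ξ y k s : ℝ) :
    HasDerivAt (fun s => qxiWeight ξ s y k) (-(k ^ 2 / 2) * qxiWeight ξ s y k) s := by
  have h := ((((hasDerivAt_id s).const_mul (k ^ 2)).fun_neg.div_const 2).exp.mul_const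
    (Kik (ξ * k) (exp (-(y / ξ))))).mul_const (ξ * k * sinh (π * ξ * k))
  exact h.congr_deriv (by simp only [qxiWeight, id]; ring)

lemma hasDerivAt_Qxi_time (hξ : ξ ≠ 0) (ht : 0 < t) (y x : ℝ) :
    HasDerivAt (fun s => Qxi ξ s y x)
      (1 / π ^ 2 * ∫ k, qxiWeight ξ t y k * (-(k ^ 2 / 2) * Kik (ξ * k) (exp (-(x / ξ))))) t := by
  simp only [Qxi_eq_integral_qxiWeight_mul]
  set z := exp (-(x / ξ))
  set C := (z ^ 2 * K0 z + z ^ 2 * kikMoment 2 0 z + z * kikMoment 1 0 z) / ξ ^ 2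
  have hφ := continuous_Kik_mul ξ (exp_pos (-(x / ξ)))
  refine HasDerivAt.const_mul _ (hasDerivAt_integral_of_dominated_loc_of_deriv_le
    (F := fun s k => qxiWeight ξ s y k * Kik (ξ * k) z)
    (F' := fun s k => qxiWeight ξ s y k * (-(k ^ 2 / 2) * Kik (ξ * k) z))
    (bound := fun k => ‖qxiWeight ξ (t / 2) y k‖ * (C / 2))
    (Metric.ball_mem_nhds t (half_pos ht))
    (Eventually.of_forall fun s => ((continuous_qxiWeight ξ s y).mul hφ).aestronglyMeasurable)
    ((integrable_qxiWeight ξ ht y).mul_bdd hφ.aestronglyMeasurable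
      (ae_of_all _ fun k => abs_Kik_le (ξ * k) (exp_pos _)))
    ((continuous_qxiWeight ξ t y).mul (((continuous_pow 2).div_const 2).neg.mul
      hφ)).aestronglyMeasurable
    (ae_of_all _ fun k s hs => ?_) ((integrable_qxiWeight ξ (half_pos ht) y).norm.mul_const _)
    (ae_of_all _ fun k s _ => ?_)).2
  · have hts : t / 2 ≤ s := by linarith [(abs_lt.1 (mem_ball_iff_norm.1 hs)).1]
    have hsq := abs_sq_mul_Kik_le hξ k (exp_pos (-(x / ξ)))
    simp only [norm_eq_abs]
    rw [show qxiWeight ξ s y k * (-(k ^ 2 / 2) * Kik (ξ * k) z)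
      = -(qxiWeight ξ s y k * (k ^ 2 * Kik (ξ * k) z)) / 2 by ring,
      abs_div, abs_neg, abs_mul, abs_two, mul_div_assoc]
    exact mul_le_mul (abs_qxiWeight_le_of_le ξ y k hts) (div_le_div_of_nonneg_right hsq two_pos.le)
      (by positivity) (abs_nonneg _)
  · exact ((hasDerivAt_qxiWeight_time ξ y k s).mul_const _).congr_deriv (by ring)

lemma Qxi_heat_equation (hξ : ξ ≠ 0) (ht : 0 < t) (y x : ℝ) :
    1 / π ^ 2 * ∫ k, qxiWeight ξ t y k * (-(k ^ 2 / 2) * Kik (ξ * k) (exp (-(x / ξ))))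
      = 1 / 2 * (1 / π ^ 2 * ∫ k, qxiWeight ξ t y k
          * ((exp (-(x / ξ)) ^ 2 - (ξ * k) ^ 2) / ξ ^ 2 * Kik (ξ * k) (exp (-(x / ξ)))))
        - exp (-(x / ξ)) ^ 2 / (2 * ξ ^ 2) * Qxi ξ t y x := by
  rw [Qxi_eq_integral_qxiWeight_mul]
  set z := exp (-(x / ξ))
  have hφ := continuous_Kik_mul ξ (exp_pos (-(x / ξ)))
  have hint₀ : Integrable fun k => qxiWeight ξ t y k * Kik (ξ * k) z :=
    (integrable_qxiWeight ξ ht y).mul_bdd hφ.aestronglyMeasurable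
      (ae_of_all _ fun k => abs_Kik_le (ξ * k) (exp_pos _))
  have hint₂ : Integrable fun k => qxiWeight ξ t y k * (k ^ 2 * Kik (ξ * k) z) :=
    (integrable_qxiWeight ξ ht y).mul_bdd ((continuous_pow 2).mul hφ).aestronglyMeasurable
      (ae_of_all _ fun k => abs_sq_mul_Kik_le hξ k (exp_pos _))
  have htime : (fun k => qxiWeight ξ t y k * (-(k ^ 2 / 2) * Kik (ξ * k) z))
      = fun k => -(1 / 2) * (qxiWeight ξ t y k * (k ^ 2 * Kik (ξ * k) z)) := by
    funext k; ring
  have hspace : (fun k => qxiWeight ξ t y k * ((z ^ 2 - (ξ * k) ^ 2) / ξ ^ 2 * Kik (ξ * k) z))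
      = fun k => z ^ 2 / ξ ^ 2 * (qxiWeight ξ t y k * Kik (ξ * k) z)
        - qxiWeight ξ t y k * (k ^ 2 * Kik (ξ * k) z) := by
    funext k; field_simp
  rw [htime, hspace, integral_const_mul,
    integral_sub (hint₀.const_mul _) hint₂, integral_const_mul]
  ring

end QxiDerivatives

/-- The conditioned killing Brownian motion has the Matsumoto–Yor generator:
`u(t,x) = (K₀(e^{-y/ξ})/K₀(e^{-x/ξ})) Q_ξ(t,y|x)` satisfies
`∂u/∂t = (1/2) ∂²u/∂x² + (d/dx log K₀(e^{-x/ξ})) ∂u/∂x`. -/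
theorem conditioned_process_matsumoto_yor_generator (ξ : ℝ) (hξ : 0 < ξ) (y : ℝ)
    (t : ℝ) (ht : 0 < t) (x : ℝ) :
    deriv (fun s => (K0 (Real.exp (-(y / ξ))) / K0 (Real.exp (-(x / ξ)))) * Qxi ξ s y x) t
      = (1 / 2) *
          deriv (deriv (fun r =>
            (K0 (Real.exp (-(y / ξ))) / K0 (Real.exp (-(r / ξ)))) * Qxi ξ t y r)) x
        + deriv (fun r => Real.log (K0 (Real.exp (-(r / ξ))))) x *
          deriv (fun r =>
            (K0 (Real.exp (-(y / ξ))) / K0 (Real.exp (-(r / ξ)))) * Qxi ξ t y r) x := by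
  simp only [K0_eq_Kik]
  exact deriv_hTransform (Q := fun s r => Qxi ξ s y r)
    (fun r => K0_eq_Kik _ ▸ (K0_pos (exp_pos _)).ne')
    (fun r => (hasDerivAt_Kik_exp 0 ξ r).differentiableAt) (hasDerivAt_deriv_Kik_exp hξ.ne' 0 x)
    (fun r => (hasDerivAt_Qxi_space hξ ht y r).differentiableAt)
    (hasDerivAt_deriv_Qxi_space hξ ht y x) (hasDerivAt_Qxi_time hξ.ne' ht y x)
    (Qxi_heat_equation hξ.ne' ht y x) (by ring)
end
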